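/- arXiv:2401.02944 — 2 statements merged into one kernel-verified Lean document; each statement's English description precedes it below -/
import Mathlib

section
/- Let s ≥ 0, γ > 0, and let σ, u ∈ ℝ^{n} (n ≥ 1) satisfy the Tresca friction conditions: either (u = 0 and |σ| ≤ s) or (u ≠ 0 and σ = −s·u/|u|). Then σ = [σ − γ·u]_s, where [·]_s is the projection onto the closed ball B(0, s) in ℝ^n (with the convention [x]_0 = 0). Conversely, if σ = [σ − γ·u]_s, then the Tresca friction conditions hold. -/
noncomputable def projBall {n : ℕ} (s : ℝ) (x : EuclideanSpace ℝ (Fin n)) :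
    EuclideanSpace ℝ (Fin n) :=
  if ‖x‖ ≤ s then x else (s / ‖x‖) • x

theorem tresca_nitsche_equiv {n : ℕ} (hn : 1 ≤ n) {s γ : ℝ} (hs : 0 ≤ s)
    (hγ : 0 < γ) (σ u : EuclideanSpace ℝ (Fin n)) :
    ((u = 0 ∧ ‖σ‖ ≤ s) ∨ (u ≠ 0 ∧ σ = -((s / ‖u‖) • u))) ↔
      σ = projBall s (σ - γ • u) := by
  unfold projBall
  constructor
  · rintro (⟨hu, hσ⟩ | ⟨hu, hσ⟩)
    · simp [hu, hσ]
    · have hup : 0 < ‖u‖ := norm_pos_iff.mpr hu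
      set a : ℝ := s + γ * ‖u‖ with ha
      have has : s < a := by nlinarith
      have hap : 0 < a := lt_of_le_of_lt hs has
      have hx : σ - γ • u = -((a / ‖u‖) • u) := by
        rw [hσ]
        rw [← neg_smul, ← neg_smul, ← sub_smul]
        congr 1
        field_simp [ha]
        ring
      have hnx : ‖σ - γ • u‖ = a := by
        rw [hx, norm_neg, norm_smul, Real.norm_eq_abs,
          abs_of_pos (div_pos hap hup)]
        field_simp
      rw [hnx, if_neg (not_le.mpr has), hx, hσ, smul_neg, smul_smul]
      congr 2
      field_simp
  · intro h
    by_cases hle : ‖σ - γ • u‖ ≤ s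
    · rw [if_pos hle] at h
      have hu : u = 0 := by
        have : γ • u = 0 := by
          have := sub_eq_self.mp h.symm
          simpa using this
        simpa [hγ.ne'] using this
      left
      refine ⟨hu, ?_⟩
      simpa [hu] using hle
    · push_neg at hle
      rw [if_neg (not_le.mpr hle)] at h
      have hxp : 0 < ‖σ - γ • u‖ := lt_of_le_of_lt hs hle
      have hnσ : ‖σ‖ = s := by
        rw [h, norm_smul, Real.norm_eq_abs, abs_of_nonneg (div_nonneg hs hxp.le)]
        field_simp
      rcases eq_or_lt_of_le hs with hs0 | hs0
      · -- s = 0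
        have hσ0 : σ = 0 := by
          rw [← norm_eq_zero, hnσ, hs0]
        have hu : u ≠ 0 := by
          intro hu0
          rw [hσ0, hu0] at hle
          simp at hle
          linarith [hs, hle, hs0]
        right
        refine ⟨hu, ?_⟩
        rw [hσ0, ← hs0]
        simp
      · -- s > 0
        set x := σ - γ • u with hxdef
        set t : ℝ := s / ‖x‖ with ht
        have htp : 0 < t := div_pos hs0 hxp
        have ht1 : t < 1 := (div_lt_one hxp).mpr hle
        have hu : u ≠ 0 := by
          intro hu0
          have : σ = t • σ := by simpa [hu0, hxdef] using h
          have : (1 - t) • σ = 0 := by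
            rw [sub_smul, one_smul, sub_eq_zero]; exact this
          have hσ0 : σ = 0 := by
            have h1t : (1 - t) ≠ 0 := by linarith
            exact (smul_eq_zero.mp this).resolve_left h1t
          rw [hσ0] at hnσ
          simp at hnσ
          linarith
        have hup : 0 < ‖u‖ := norm_pos_iff.mpr hu
        -- from h: (1-t) • σ = -(t*γ) • u
        have key : σ = (-(t * γ) / (1 - t)) • u := by
          have h1t : (0:ℝ) < 1 - t := by linarith
          have e1 : (1 - t) • σ = (-(t * γ)) • u := by
            have h' : σ = t • σ - (t * γ) • u := by
              conv_lhs => rw [h, hxdef]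
              rw [smul_sub, smul_smul]
            rw [sub_smul, one_smul, neg_smul]
            nth_rewrite 1 [h']
            abel
          calc σ = ((1 - t)⁻¹ * (1 - t)) • σ := by
                rw [inv_mul_cancel₀ h1t.ne', one_smul]
            _ = (1 - t)⁻¹ • ((1 - t) • σ) := by rw [smul_smul]
            _ = (1 - t)⁻¹ • ((-(t * γ)) • u) := by rw [e1]
            _ = (-(t * γ) / (1 - t)) • u := by
                rw [smul_smul, div_eq_inv_mul]
        set c : ℝ := -(t * γ) / (1 - t) with hc
        have h1t : (0:ℝ) < 1 - t := by linarith
        have hcneg : c < 0 := by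
          apply div_neg_of_neg_of_pos _ h1t
          nlinarith
        have hcn : -c * ‖u‖ = s := by
          have := hnσ
          rw [key, norm_smul, Real.norm_eq_abs, abs_of_neg hcneg] at this
          linarith [this]
        right
        refine ⟨hu, ?_⟩
        rw [key, ← neg_smul]
        congr 1
        have : c = -(s / ‖u‖) := by
          field_simp
          nlinarith [hcn]
        exact this
end

section
/- Let d ∈ {2, 3} and let λ, μ > 0. For the isotropic elasticity tensor, σ(E) := λ·tr(E)·I_d + 2μ·E applied to symmetric matrices E ∈ ℝ^{d×d}, one has the bound ‖σ(E)‖_F² ≤ (dλ + 4μ)·(σ(E) : E), where ‖·‖_F is the Frobenius norm and : the Frobenius inner product. -/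
def frob {d : ℕ} (A B : Matrix (Fin d) (Fin d) ℝ) : ℝ :=
  ∑ i, ∑ j, A i j * B i j

lemma frob_add_left {d : ℕ} (A B C : Matrix (Fin d) (Fin d) ℝ) :
    frob (A + B) C = frob A C + frob B C := by
  simp [frob, add_mul, Finset.sum_add_distrib]

lemma frob_smul_left {d : ℕ} (c : ℝ) (A B : Matrix (Fin d) (Fin d) ℝ) :
    frob (c • A) B = c * frob A B := by
  simp [frob, Finset.mul_sum, mul_assoc]

lemma frob_comm {d : ℕ} (A B : Matrix (Fin d) (Fin d) ℝ) :
    frob A B = frob B A := by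
  simp [frob, mul_comm]

lemma frob_one_left {d : ℕ} (A : Matrix (Fin d) (Fin d) ℝ) :
    frob 1 A = A.trace := by
  simp [frob, Matrix.one_apply, ite_mul, Matrix.trace, Matrix.diag]

lemma frob_one_one {d : ℕ} : frob (1 : Matrix (Fin d) (Fin d) ℝ) 1 = d := by
  simp [frob_one_left, Matrix.trace, Matrix.diag, Matrix.one_apply]

lemma frob_add_right {d : ℕ} (A B C : Matrix (Fin d) (Fin d) ℝ) :
    frob A (B + C) = frob A B + frob A C := by
  rw [frob_comm, frob_add_left, frob_comm B, frob_comm C]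

lemma frob_smul_right {d : ℕ} (c : ℝ) (A B : Matrix (Fin d) (Fin d) ℝ) :
    frob A (c • B) = c * frob A B := by
  rw [frob_comm, frob_smul_left, frob_comm]

lemma frob_self_nonneg {d : ℕ} (A : Matrix (Fin d) (Fin d) ℝ) : 0 ≤ frob A A := by
  apply Finset.sum_nonneg
  intro i _
  exact Finset.sum_nonneg fun j _ => mul_self_nonneg _

theorem elasticity_tensor_bound {d : ℕ} (hd : d = 2 ∨ d = 3)
    {lam mu : ℝ} (hlam : 0 < lam) (hmu : 0 < mu)
    (E : Matrix (Fin d) (Fin d) ℝ) (hE : E.IsSymm) :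
    frob (lam • E.trace • (1 : Matrix (Fin d) (Fin d) ℝ) + (2 * mu) • E)
        (lam • E.trace • (1 : Matrix (Fin d) (Fin d) ℝ) + (2 * mu) • E) ≤
      ((d : ℝ) * lam + 4 * mu) *
        frob (lam • E.trace • (1 : Matrix (Fin d) (Fin d) ℝ) + (2 * mu) • E) E := by
  set t := E.trace with ht
  have hsm : lam • t • (1 : Matrix (Fin d) (Fin d) ℝ) = (lam * t) • 1 := by
    rw [smul_smul]
  rw [hsm]
  have h1E : frob (1 : Matrix (Fin d) (Fin d) ℝ) E = t := frob_one_left E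
  have hE1 : frob E (1 : Matrix (Fin d) (Fin d) ℝ) = t := by rw [frob_comm]; exact h1E
  have hL : frob ((lam * t) • 1 + (2 * mu) • E) ((lam * t) • 1 + (2 * mu) • E) =
      lam * t * (lam * t) * d + 2 * (lam * t * (2 * mu) * t) + 2 * mu * (2 * mu) * frob E E := by
    simp only [frob_add_left, frob_add_right, frob_smul_left, frob_smul_right,
      frob_one_one, h1E, hE1]
    ring
  have hR : frob ((lam * t) • 1 + (2 * mu) • E) E = lam * t * t + 2 * mu * frob E E := by
    rw [frob_add_left, frob_smul_left, frob_smul_left, h1E]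
  rw [hL, hR]
  have hF := frob_self_nonneg E
  have hd' : (0:ℝ) < d := by rcases hd with h | h <;> simp [h]
  nlinarith [mul_nonneg (mul_nonneg hd'.le hlam.le) (mul_nonneg hmu.le hF),
    mul_nonneg (mul_nonneg hmu.le hmu.le) hF]
end
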